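/- The second moment of R_{η}^{(α,β)} is R_{η}^{(α,β)}(t²; x) = x² + [x((2α+5)β+1)η + β(α²+4α+3) + α + 1]/(η²β). -/

import Mathlib

/-!
With `y = ηx/2`, the Laguerre polynomial `L_κ^{(α)}(-y)` has the nonnegative coefficients
`y^ι/ι! · multichoose (α+ι+1) (κ-ι)`, so for a nonnegative weight `w` the series
`Σ_κ 2^{-κ} L_κ^{(α)}(-y) w(κ)` may be rearranged as a double series in `ι` and `m = κ - ι`.
The kernel moment `∫ I_{κ,η}^β(z) z² dz = κβ(κβ+1)/(ηβ)²` is quadratic in `κ`; for such a weight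
the inner sums are factorial moments of the negative binomial series
`Σ_m multichoose c m t^m = (1-t)^{-c}` and the outer ones are moments of the exponential series,
which gives `2^{α+1} e^y` times a quadratic polynomial in `y`.
-/

open Real MeasureTheory Filter Set

/-- Generalized Laguerre polynomial `L_κ^{(α)}(x)`. -/
noncomputable def lag (κ : ℕ) (α x : ℝ) : ℝ :=
  ∑ ι ∈ Finset.range (κ + 1),
    (-1 : ℝ) ^ ι / (Nat.factorial ι) *
      ((∏ s ∈ Finset.range (κ - ι), (α + ι + 1 + s)) / (Nat.factorial (κ - ι))) * x ^ ι
/-- Gamma-type kernel `I_{κ,η}^β(z)`. -/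
noncomputable def ker (η β : ℝ) (κ : ℕ) (z : ℝ) : ℝ :=
  η * β * Real.exp (-(η * β * z)) * (η * β * z) ^ ((κ : ℝ) * β - 1) / Real.Gamma ((κ : ℝ) * β)
/-- The operators `R_η^{(α,β)}(Φ; x)`, with the `κ = 0` term interpreted as `Φ(0)·(coefficient)`. -/
noncomputable def Rop (η β α : ℝ) (Φ : ℝ → ℝ) (x : ℝ) : ℝ :=
  Real.exp (-(η * x) / 2) * (2 : ℝ) ^ (-α - 1) *
    ∑' κ : ℕ, (2 : ℝ) ^ (-(κ : ℝ)) * lag κ α (-(η * x) / 2) *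
      (if κ = 0 then Φ 0 else ∫ z in Set.Ioi (0 : ℝ), ker η β κ z * Φ z)

open Finset

theorem ascPochhammer_eval_eq_prod_range {R : Type*} [CommSemiring R] (n : ℕ) (r : R) :
    (ascPochhammer R n).eval r = ∏ s ∈ range n, (r + s) := by
  induction n with
  | zero => simp
  | succ n ih => rw [ascPochhammer_succ_eval, ih, prod_range_succ]

namespace Ring

section Field

variable {K : Type*} [Field K] [CharZero K] [BinomialRing K]

theorem multichoose_eq_prod_range_div_factorial (c : K) (m : ℕ) :
    multichoose c m = (∏ s ∈ range m, (c + s)) / m.factorial := by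
  rw [eq_div_iff (Nat.cast_ne_zero.mpr m.factorial_ne_zero), ← ascPochhammer_eval_eq_prod_range,
    mul_comm, ← nsmul_eq_mul, factorial_nsmul_multichoose_eq_ascPochhammer,
    Polynomial.ascPochhammer_smeval_eq_eval]

theorem succ_mul_multichoose_succ (c : K) (m : ℕ) :
    ((m : K) + 1) * multichoose c (m + 1) = c * multichoose (c + 1) m := by
  simp only [multichoose_eq_prod_range_div_factorial, prod_range_succ', Nat.factorial_succ,
    Nat.cast_mul, Nat.cast_succ, Nat.cast_zero, add_zero]
  have hsucc : ∀ s : ℕ, c + ((s : K) + 1) = c + 1 + s := fun s => by ring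
  simp only [hsucc]
  field_simp

end Field

theorem multichoose_nonneg {K : Type*} [Field K] [LinearOrder K] [IsStrictOrderedRing K]
    [BinomialRing K] {c : K} (hc : 0 ≤ c) (m : ℕ) : 0 ≤ multichoose c m := by
  rw [multichoose_eq_prod_range_div_factorial]
  exact div_nonneg (prod_nonneg fun s _ => by positivity) (by positivity)

end Ring

theorem HasSum.natCast_mul_of_succ_mul {a b : ℕ → ℝ} {lam s : ℝ}
    (hab : ∀ n : ℕ, ((n : ℝ) + 1) * a (n + 1) = lam * b n) (h : HasSum b s) :
    HasSum (fun m : ℕ => m * a m) (lam * s) := by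
  refine (hasSum_nat_add_iff' 1).mp ?_
  simpa [hab] using h.mul_left lam

theorem HasSum.sum_antidiagonal {α : Type*} [AddCommMonoid α] [TopologicalSpace α]
    [ContinuousAdd α] [RegularSpace α] {f : ℕ × ℕ → α} {a : α} (h : HasSum f a) :
    HasSum (fun n => ∑ kl ∈ antidiagonal n, f kl) a := by
  refine ((HasAntidiagonal.sigmaAntidiagonalEquivProd.hasSum_iff).mpr h).sigma fun n => ?_
  simpa only [Function.comp_apply, HasAntidiagonal.sigmaAntidiagonalEquivProd_apply,
    Finset.sum_coe_sort] using hasSum_fintype (fun kl : antidiagonal n => f kl)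

theorem hasSum_multichoose_mul_pow (c : ℝ) {t : ℝ} (ht : |t| < 1) :
    HasSum (fun m : ℕ => Ring.multichoose c m * t ^ m) ((1 - t) ^ (-c)) := by
  have h := (one_div_one_sub_rpow_hasFPowerSeriesOnBall_zero c).hasSum (y := t)
    (by simpa [Metric.mem_eball, enorm_eq_nnnorm, ← NNReal.coe_lt_coe] using ht)
  simp only [FormalMultilinearSeries.ofScalars_apply_eq, smul_eq_mul, zero_add,
    ← Ring.multichoose_eq] at h
  rwa [one_div, ← rpow_neg (by linarith [abs_lt.mp ht])] at h

theorem hasSum_natCast_mul_multichoose_mul_pow (c : ℝ) {t : ℝ} (ht : |t| < 1) :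
    HasSum (fun m : ℕ => m * (Ring.multichoose c m * t ^ m)) (c * t * (1 - t) ^ (-(c + 1))) :=
  (hasSum_multichoose_mul_pow (c + 1) ht).natCast_mul_of_succ_mul fun n => by
    rw [pow_succ, ← mul_assoc, ← mul_assoc, Ring.succ_mul_multichoose_succ]; ring

theorem hasSum_natCast_mul_natCast_sub_one_mul_multichoose_mul_pow (c : ℝ) {t : ℝ}
    (ht : |t| < 1) :
    HasSum (fun m : ℕ => m * ((m - 1) * (Ring.multichoose c m * t ^ m)))
      (c * (c + 1) * t ^ 2 * (1 - t) ^ (-(c + 2))) := by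
  have h := (hasSum_natCast_mul_multichoose_mul_pow (c + 1) ht).natCast_mul_of_succ_mul
    (a := fun m : ℕ => (m - 1) * (Ring.multichoose c m * t ^ m)) (lam := c * t) fun n => by
      push_cast
      rw [pow_succ]
      linear_combination (n : ℝ) * t ^ n * t * Ring.succ_mul_multichoose_succ c n
  convert h using 1
  rw [show -(c + 1 + 1) = -(c + 2) by ring]
  ring

theorem hasSum_pow_div_factorial (y : ℝ) :
    HasSum (fun m : ℕ => y ^ m / m.factorial) (exp y) := by
  rw [exp_eq_exp_ℝ]
  exact NormedSpace.expSeries_div_hasSum_exp y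

theorem hasSum_natCast_mul_pow_div_factorial (y : ℝ) :
    HasSum (fun m : ℕ => m * (y ^ m / m.factorial)) (y * exp y) :=
  (hasSum_pow_div_factorial y).natCast_mul_of_succ_mul fun n => by
    rw [Nat.factorial_succ, pow_succ]; push_cast; field_simp

theorem hasSum_natCast_mul_natCast_sub_one_mul_pow_div_factorial (y : ℝ) :
    HasSum (fun m : ℕ => m * ((m - 1) * (y ^ m / m.factorial))) (y ^ 2 * exp y) := by
  have h := (hasSum_natCast_mul_pow_div_factorial y).natCast_mul_of_succ_mul
    (a := fun m : ℕ => (m - 1) * (y ^ m / m.factorial)) (lam := y) fun n => by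
      rw [Nat.factorial_succ, pow_succ]; push_cast; field_simp; ring
  convert h using 1; ring

theorem hasSum_quadratic_mul_pow_div_factorial (y p q r : ℝ) :
    HasSum (fun m : ℕ => (p * m ^ 2 + q * m + r) * (y ^ m / m.factorial))
      ((p * (y ^ 2 + y) + q * y + r) * exp y) := by
  have h := ((hasSum_natCast_mul_natCast_sub_one_mul_pow_div_factorial y).mul_left p).add
    (((hasSum_natCast_mul_pow_div_factorial y).mul_left (p + q)).add
      ((hasSum_pow_div_factorial y).mul_left r))
  convert h using 1
  · rfl
  · funext m; ring
  · ring

theorem hasSum_multichoose_half_mul_quadratic (c A B : ℝ) (ι : ℕ) :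
    HasSum (fun m : ℕ => Ring.multichoose c m * (1 / 2) ^ m *
        (A * ((ι + m : ℕ) : ℝ) ^ 2 + B * (ι + m : ℕ)))
      (2 ^ c * (A * ((c + ι) ^ 2 + 2 * c) + B * (c + ι))) := by
  have ht : |(1 / 2 : ℝ)| < 1 := by norm_num [abs_of_pos]
  have h := ((hasSum_natCast_mul_natCast_sub_one_mul_multichoose_mul_pow c ht).mul_left A).add
    (((hasSum_natCast_mul_multichoose_mul_pow c ht).mul_left (2 * A * ι + A + B)).add
      ((hasSum_multichoose_mul_pow c ht).mul_left (A * ι ^ 2 + B * ι)))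
  have hhalf : ∀ s : ℝ, (1 - 1 / 2 : ℝ) ^ (-s) = 2 ^ s := fun s => by
    rw [show (1 : ℝ) - 1 / 2 = 2⁻¹ by norm_num, inv_rpow zero_le_two, rpow_neg zero_le_two,
      inv_inv]
  rw [hhalf, hhalf, hhalf, rpow_add two_pos, rpow_add two_pos, rpow_two, rpow_one] at h
  convert h using 1
  · rfl
  · funext m; push_cast; ring
  · ring

theorem lag_neg (κ : ℕ) (α y : ℝ) :
    lag κ α (-y) = ∑ ι ∈ range (κ + 1),
      y ^ ι / ι.factorial * Ring.multichoose (α + ι + 1) (κ - ι) := by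
  refine sum_congr rfl fun ι _ => ?_
  have hsign : ((-1 : ℝ) ^ ι) * (-1) ^ ι = 1 := by rw [← mul_pow]; norm_num
  rw [Ring.multichoose_eq_prod_range_div_factorial, neg_pow y]
  linear_combination y ^ ι / ι.factorial *
    ((∏ s ∈ range (κ - ι), (α + ι + 1 + s)) / (κ - ι).factorial) * hsign

theorem hasSum_pow_mul_lag_neg_mul {α y t S : ℝ} {W R : ℕ → ℝ} (hα : -1 ≤ α) (hy : 0 ≤ y)
    (ht : 0 ≤ t) (hW : ∀ κ, 0 ≤ W κ)
    (hR : ∀ ι : ℕ, HasSum (fun m : ℕ => Ring.multichoose (α + ι + 1) m * t ^ m * W (ι + m)) (R ι))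
    (hS : HasSum (fun ι : ℕ => (t * y) ^ ι / ι.factorial * R ι) S) :
    HasSum (fun κ : ℕ => t ^ κ * lag κ α (-y) * W κ) S := by
  set g : ℕ × ℕ → ℝ := fun p => (t * y) ^ p.1 / p.1.factorial *
    (Ring.multichoose (α + p.1 + 1) p.2 * t ^ p.2 * W (p.1 + p.2)) with hg_def
  have hrow (ι : ℕ) : HasSum (fun m => g (ι, m)) ((t * y) ^ ι / ι.factorial * R ι) :=
    (hR ι).mul_left _
  have hg_nonneg : 0 ≤ g := fun p =>
    mul_nonneg (by positivity) (mul_nonneg (mul_nonneg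
      (Ring.multichoose_nonneg (by linarith [(Nat.cast_nonneg p.1 : (0 : ℝ) ≤ p.1)]) _)
      (by positivity)) (hW _))
  have hg : Summable g := (summable_prod_of_nonneg hg_nonneg).mpr
    ⟨fun ι => (hrow ι).summable, by simpa only [(hrow _).tsum_eq] using hS.summable⟩
  have hgS : HasSum g S := (hS.unique (hg.hasSum.prod_fiberwise hrow)) ▸ hg.hasSum
  convert hgS.sum_antidiagonal using 1
  funext κ
  rw [Nat.sum_antidiagonal_eq_sum_range_succ_mk, lag_neg, mul_sum, sum_mul]
  refine sum_congr rfl fun ι hι => ?_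
  have hικ : ι + (κ - ι) = κ := Nat.add_sub_cancel' (Nat.lt_succ_iff.mp (mem_range.mp hι))
  have htκ : t ^ κ = t ^ ι * t ^ (κ - ι) := by rw [← pow_add, hικ]
  simp only [hg_def, hικ]
  rw [htκ, mul_pow]
  ring

theorem hasSum_half_pow_mul_lag_neg_mul_quadratic {α y A B : ℝ} (hα : -1 ≤ α) (hy : 0 ≤ y)
    (hA : 0 ≤ A) (hB : 0 ≤ B) :
    HasSum (fun κ : ℕ => (1 / 2) ^ κ * lag κ α (-y) * (A * κ ^ 2 + B * κ))
      (2 ^ (α + 1) * exp y *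
        (A * ((2 * y + α + 1) ^ 2 + 2 * (2 * y + α + 1) + 2 * y) + B * (2 * y + α + 1))) := by
  refine hasSum_pow_mul_lag_neg_mul hα hy (by norm_num) (W := fun κ => A * κ ^ 2 + B * κ)
    (fun κ => by positivity) (fun ι => hasSum_multichoose_half_mul_quadratic _ A B ι) ?_
  have h := (hasSum_quadratic_mul_pow_div_factorial y (4 * A) (4 * A * (α + 1) + 2 * A + 2 * B)
    (A * ((α + 1) ^ 2 + 2 * (α + 1)) + B * (α + 1))).mul_left (2 ^ (α + 1))
  convert h using 1
  · rfl
  · funext ι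
    rw [show α + ι + 1 = α + 1 + ι by ring, rpow_add two_pos, rpow_natCast, mul_pow, one_div,
      inv_pow]
    field_simp
    ring
  · ring

theorem integral_ker_mul_rpow {η β s : ℝ} (hηβ : 0 < η * β) (κ : ℕ) (hs : 0 < κ * β + s) :
    ∫ z in Ioi 0, ker η β κ z * z ^ s = Gamma (κ * β + s) / (Gamma (κ * β) * (η * β) ^ s) := by
  have hpoint : ∀ z ∈ Ioi (0 : ℝ), ker η β κ z * z ^ s =
      (η * β) ^ (κ * β : ℝ) / Gamma (κ * β) * (z ^ (κ * β + s - 1) * exp (-(η * β * z))) := by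
    intro z hz
    rw [_root_.ker, mul_rpow hηβ.le (le_of_lt hz), rpow_sub_one hηβ.ne',
      show (κ : ℝ) * β + s - 1 = κ * β - 1 + s by ring, rpow_add hz, rpow_sub_one (ne_of_gt hz)]
    have hη := left_ne_zero_of_mul hηβ.ne'
    have hβ := right_ne_zero_of_mul hηβ.ne'
    field_simp
  rw [setIntegral_congr_fun measurableSet_Ioi hpoint, integral_const_mul,
    integral_rpow_mul_exp_neg_mul_Ioi hs hηβ, one_div, inv_rpow hηβ.le, rpow_add hηβ]
  field_simp

theorem integral_ker_mul_sq {η β : ℝ} (hη : 0 < η) (hβ : 0 < β) {κ : ℕ} (hκ : κ ≠ 0) :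
    ∫ z in Ioi 0, ker η β κ z * z ^ 2 = κ * β * (κ * β + 1) / (η * β) ^ 2 := by
  have hp : 0 < (κ : ℝ) * β := mul_pos (by positivity) hβ
  simp_rw [← rpow_two]
  rw [integral_ker_mul_rpow (mul_pos hη hβ) κ (by positivity),
    show (κ : ℝ) * β + 2 = κ * β + 1 + 1 by ring, Gamma_add_one (by positivity),
    Gamma_add_one hp.ne']
  field_simp

theorem Rop_sq_eq_tsum {α β η : ℝ} (hβ : 0 < β) (hη : 0 < η) (x : ℝ) :
    Rop η β α (fun t => t ^ 2) x = exp (-(η * x) / 2) * 2 ^ (-α - 1) *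
      ∑' κ : ℕ, (1 / 2) ^ κ * lag κ α (-(η * x / 2)) *
        (1 / η ^ 2 * κ ^ 2 + 1 / (η ^ 2 * β) * κ) := by
  rw [Rop]
  congr 1
  refine tsum_congr fun κ => ?_
  rw [rpow_neg zero_le_two, rpow_natCast, one_div, inv_pow, neg_div]
  congr 1
  rcases eq_or_ne κ 0 with rfl | hκ
  · simp
  · rw [if_neg hκ, integral_ker_mul_sq hη hβ hκ]
    field_simp

/-- The second moment of `R_η^{(α,β)}`. -/
theorem stmt8 (α β η x : ℝ) (hα : -1 < α) (hβ : 0 < β) (hη : 0 < η) (hx : 0 ≤ x) :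
    Rop η β α (fun t => t ^ 2) x =
      x ^ 2 + (x * ((2 * α + 5) * β + 1) * η + β * (α ^ 2 + 4 * α + 3) + α + 1) / (η ^ 2 * β) := by
  have hsum := hasSum_half_pow_mul_lag_neg_mul_quadratic (y := η * x / 2) hα.le (by positivity)
    (by positivity : 0 ≤ 1 / η ^ 2) (by positivity : 0 ≤ 1 / (η ^ 2 * β))
  have hexp : exp (-(η * x) / 2) = (exp (η * x / 2))⁻¹ := by rw [← exp_neg, neg_div]
  have hpow : (2 : ℝ) ^ (-α - 1) = (2 ^ (α + 1))⁻¹ := by rw [← rpow_neg zero_le_two, neg_add']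
  rw [Rop_sq_eq_tsum hβ hη, hsum.tsum_eq, hexp, hpow]
  field_simp
  ring
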